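/- arXiv:1707.00264 — 3 statements merged into one kernel-verified Lean document; each statement's English description precedes it below -/
import Mathlib

section
/- Let k ≥ 0 and let T : (Fin 4)^(k+2) → ℝ be an array with boost order ≤ b with respect to the boost weights w. Then the array S : (Fin 4)^k → ℝ obtained by contracting the last two slots of T with the null-frame metric, S(a₁,…,a_k) = ∑_{c,d} g(c,d) · T(a₁,…,a_k,c,d), also has boost order ≤ b. (Contraction with the metric does not increase boost order, since the only nonvanishing components g(c,d) have w(c)+w(d)=0.) -/
/-- The null-frame metric on a 4-dimensional Lorentzian vector space:
`g 0 1 = g 1 0 = 1`, `g 2 2 = g 3 3 = 1`, all other components vanish. -/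
def gnf : Fin 4 → Fin 4 → ℝ := fun a b =>
  if (a = 0 ∧ b = 1) ∨ (a = 1 ∧ b = 0) ∨ (a = 2 ∧ b = 2) ∨ (a = 3 ∧ b = 3) then 1 else 0

/-- Boost weights of the null-frame indices: `w 0 = 1`, `w 1 = -1`, `w 2 = w 3 = 0`. -/
def bw : Fin 4 → ℤ := ![1, -1, 0, 0]

/-! The index weights add up along `Fin.snoc`, so every nonzero term `g c d * T (a, c, d)` of the
contraction has the weight `w a + (w c + w d) = w a > b` and hence vanishes. -/

theorem Fin.sum_comp_snoc {α M : Type*} [AddCommMonoid M] {n : ℕ} (w : α → M) (a : Fin n → α)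
    (x : α) : ∑ i, w ((Fin.snoc a x : Fin (n + 1) → α) i) = ∑ i, w (a i) + w x := by
  simp [Fin.sum_univ_castSucc]

theorem sum_snoc_snoc_eq_zero_of_weight_zero {ι W R : Type*} [Fintype ι] [AddCommMonoid W]
    [LT W] [NonUnitalNonAssocSemiring R] (w : ι → W) (g : ι → ι → R)
    (hg : ∀ c d, g c d ≠ 0 → w c + w d = 0) {k : ℕ} (b : W) (T : (Fin (k + 2) → ι) → R)
    (hT : ∀ a : Fin (k + 2) → ι, b < ∑ i, w (a i) → T a = 0)
    (a : Fin k → ι) (ha : b < ∑ i, w (a i)) :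
    ∑ c, ∑ d, g c d * T (Fin.snoc (Fin.snoc a c) d) = 0 := by
  refine Finset.sum_eq_zero fun c _ => Finset.sum_eq_zero fun d _ => ?_
  by_cases hcd : g c d = 0
  · rw [hcd, zero_mul]
  · have hweight : b < ∑ i, w ((Fin.snoc (Fin.snoc a c) d : Fin (k + 2) → ι) i) := by
      rw [Fin.sum_comp_snoc, Fin.sum_comp_snoc, add_assoc, hg c d hcd, add_zero]
      exact ha
    rw [hT _ hweight, mul_zero]

theorem bw_add_bw_eq_zero_of_gnf_ne_zero (c d : Fin 4) (h : gnf c d ≠ 0) : bw c + bw d = 0 := by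
  simp only [gnf, ne_eq, ite_eq_right_iff, one_ne_zero, imp_false, not_not] at h
  revert c d
  decide

/-- Contracting the last two slots of a `(k+2)`-index array with the null-frame
metric does not increase the boost order. -/
theorem boostOrder_metric_contraction (k : ℕ) (b : ℤ)
    (T : (Fin (k + 2) → Fin 4) → ℝ)
    (hT : ∀ a : Fin (k + 2) → Fin 4, (∑ i, bw (a i)) > b → T a = 0)
    (a : Fin k → Fin 4) (ha : (∑ i, bw (a i)) > b) :
    (∑ c, ∑ d, gnf c d * T (Fin.snoc (Fin.snoc a c) d)) = 0 :=
  sum_snoc_snoc_eq_zero_of_weight_zero bw gnf bw_add_bw_eq_zero_of_gnf_ne_zero b T hT a ha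
end

section
/- Let k ≥ 1 and let T : (Fin 4)^(2k) → ℝ be an array with boost order ≤ −1 with respect to the boost weights w. Then the complete contraction of T with the null-frame metric vanishes: ∑ over all index assignments a : Fin (2k) → Fin 4 of (∏_{i=0}^{k−1} g(a(2i), a(2i+1))) · T(a(0),…,a(2k−1)) = 0. (Any full scalar contraction of a tensor of negative boost order vanishes; this is the algebraic mechanism behind vanishing of scalar curvature invariants of algebraically special tensors.) -/
open Finset

theorem Fin.sum_univ_two_mul {M : Type*} [AddCommMonoid M] (k : ℕ) (f : Fin (2 * k) → M) :
    ∑ j, f j = ∑ i : Fin k, (f ⟨2 * i, by omega⟩ + f ⟨2 * i + 1, by omega⟩) := by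
  rw [← (finProdFinEquiv.trans (finCongr (Nat.mul_comm k 2))).sum_comp, Fintype.sum_prod_type]
  refine sum_congr rfl fun i _ => ?_
  rw [Fin.sum_univ_two]
  congr 2 <;> ext <;> simp only [Equiv.trans_apply, finProdFinEquiv,
    Equiv.coe_fn_mk, finCongr_apply, Fin.val_cast] <;> omega

lemma bw_add_eq_zero_of_gnf_ne_zero {x y : Fin 4} (h : gnf x y ≠ 0) : bw x + bw y = 0 := by
  fin_cases x <;> fin_cases y <;> simp_all [gnf, bw]

/-- Each factor of a nonvanishing complete contraction pairs indices of opposite boost weight. -/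
lemma sum_bw_eq_zero_of_contraction_ne_zero {k : ℕ} (a : Fin (2 * k) → Fin 4)
    (h : ∏ i : Fin k, gnf (a ⟨2 * i, by omega⟩) (a ⟨2 * i + 1, by omega⟩) ≠ 0) :
    ∑ j, bw (a j) = 0 := by
  rw [Fin.sum_univ_two_mul]
  exact sum_eq_zero fun i hi => bw_add_eq_zero_of_gnf_ne_zero (prod_ne_zero_iff.mp h i hi)

/-- Any full scalar contraction (with the null-frame metric) of a tensor of
negative boost order vanishes. -/
theorem full_contraction_vanishes (k : ℕ)
    (T : (Fin (2 * k) → Fin 4) → ℝ)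
    (hT : ∀ a : Fin (2 * k) → Fin 4, (∑ i, bw (a i)) > -1 → T a = 0) :
    (∑ a : Fin (2 * k) → Fin 4,
        (∏ i : Fin k,
          gnf (a ⟨2 * i.1, by have := i.isLt; omega⟩)
              (a ⟨2 * i.1 + 1, by have := i.isLt; omega⟩)) * T a) = 0 := by
  refine sum_eq_zero fun a _ => ?_
  rcases eq_or_ne (∏ i : Fin k, gnf (a ⟨2 * i, by omega⟩) (a ⟨2 * i + 1, by omega⟩)) 0
    with hg | hg
  · rw [hg, zero_mul]
  · rw [hT a (by rw [sum_bw_eq_zero_of_contraction_ne_zero a hg]; norm_num), mul_zero]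
end

section
/- Let T : (Fin 4)^k → ℝ be an array of boost order ≤ 0 with respect to the boost weights w, and for λ ∈ ℝ define the boosted array (B_λ T)(a₁,…,a_k) = exp(λ · (w(a₁)+…+w(a_k))) · T(a₁,…,a_k) (the action on components of the frame boost ℓ ↦ e^λ ℓ, n ↦ e^{−λ} n, which is a g-isometry). Then as λ → +∞, B_λ T converges (componentwise) to the boost-weight-zero part T₀ of T, defined by T₀(a₁,…,a_k) = T(a₁,…,a_k) if w(a₁)+…+w(a_k) = 0 and T₀(a₁,…,a_k) = 0 otherwise. (This is the limiting procedure by which a type II tensor degenerates to its type D background part.) -/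
open Filter

open Real Topology in
theorem tendsto_exp_mul_mul_atTop {s c : ℝ} (hc : 0 < s → c = 0) :
    Tendsto (fun x : ℝ => exp (x * s) * c) atTop (𝓝 (if s = 0 then c else 0)) := by
  rcases lt_trichotomy s 0 with hneg | rfl | hpos
  · rw [if_neg hneg.ne]
    have hexp : Tendsto (fun x : ℝ => exp (x * s)) atTop (𝓝 0) :=
      tendsto_exp_atBot.comp (tendsto_id.atTop_mul_const_of_neg hneg)
    simpa using hexp.mul_const c
  · simp
  · simp [hc hpos]

/-- For an array `T` of boost order `≤ 0`, the boosted array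
`(B_λ T)(a) = exp(λ · w(a)) · T(a)` converges componentwise, as `λ → +∞`,
to the boost-weight-zero part of `T`. -/
theorem boost_limit_to_bw_zero_part (k : ℕ) (T : (Fin k → Fin 4) → ℝ)
    (hT : ∀ a : Fin k → Fin 4, (∑ i, bw (a i)) > 0 → T a = 0)
    (a : Fin k → Fin 4) :
    Tendsto (fun lam : ℝ => Real.exp (lam * ((∑ i, bw (a i) : ℤ) : ℝ)) * T a)
      atTop (nhds (if (∑ i, bw (a i)) = 0 then T a else 0)) := by
  have h := tendsto_exp_mul_mul_atTop (s := ((∑ i, bw (a i) : ℤ) : ℝ)) (c := T a)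
    fun hpos => hT a (Int.cast_pos.mp hpos)
  simpa only [Int.cast_eq_zero] using h
end
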